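/- arXiv:1511.03097 — 6 statements merged into one kernel-verified Lean document; each statement's English description precedes it below -/
import Mathlib

section
/- Strongly p-summing multilinear operators satisfy the hyper-ideal property: let 1 ≤ m_1 < ⋯ < m_n be natural numbers, let A : E_1 × ⋯ × E_n → F be strongly p-summing with constant C, let B_1 : G_1 × ⋯ × G_{m_1} → E_1, ..., B_n : G_{m_{n-1}+1} × ⋯ × G_{m_n} → E_n be continuous multilinear operators and t : F → H a bounded linear operator. Then t ∘ A ∘ (B_1,...,B_n) : G_1 × ⋯ × G_{m_n} → H is strongly p-summing with constant ‖t‖ · C · ‖B_1‖ ⋯ ‖B_n‖. -/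
open scoped BigOperators

/-- `A` is strongly `p`-summing with constant `C`: for all finite sequences
`(x_j)_{j=1}^k` of tuples, `(∑ j ‖A x_j‖^p)^{1/p}` is at most `C` times the
supremum over all continuous multilinear forms `T` of norm at most `1` of
`(∑ j |T x_j|^p)^{1/p}`. -/
def StronglyPSummingWith {𝕜 : Type*} [RCLike 𝕜] {ι : Type*} [Fintype ι]
    {E : ι → Type*}
    [∀ i, NormedAddCommGroup (E i)] [∀ i, NormedSpace 𝕜 (E i)]
    {F : Type*} [NormedAddCommGroup F] [NormedSpace 𝕜 F]
    (p C : ℝ) (A : ContinuousMultilinearMap 𝕜 E F) : Prop :=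
  ∀ (k : ℕ) (x : Fin k → ∀ i, E i),
    (∑ j, ‖A (x j)‖ ^ p) ^ (1 / p) ≤
      C * ⨆ T : {T : ContinuousMultilinearMap 𝕜 E 𝕜 // ‖T‖ ≤ 1},
        (∑ j, ‖T.1 (x j)‖ ^ p) ^ (1 / p)

/-! Strongly `p`-summing is an estimate between two `ℓ_p`-type quantities, the `ℓ_p`-norm of
`(A x_j)_j` and the weak norm of `(x_j)_j` tested against multilinear forms of norm `≤ 1`.
Composing with `t` on the left costs `‖t‖` on the first one. Composing with `B₁, …, Bₙ` on the
right costs `∏ ‖Bₗ‖` on the second one, because `T ∘ (B₁, …, Bₙ)` is a multilinear form of norm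
`≤ ‖T‖ ∏ ‖Bₗ‖` and every form `S` contributes at most `‖S‖` times the weak norm. -/

theorem Real.rpow_sum_rpow_le_mul_of_le {ι : Type*} [Fintype ι] {p c : ℝ} (hp : 0 < p)
    (hc : 0 ≤ c) {a b : ι → ℝ} (ha : ∀ j, 0 ≤ a j) (hb : ∀ j, 0 ≤ b j)
    (hab : ∀ j, a j ≤ c * b j) :
    (∑ j, a j ^ p) ^ (1 / p) ≤ c * (∑ j, b j ^ p) ^ (1 / p) := by
  have hsum : ∑ j, a j ^ p ≤ c ^ p * ∑ j, b j ^ p := by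
    rw [Finset.mul_sum]
    refine Finset.sum_le_sum fun j _ => ?_
    calc a j ^ p ≤ (c * b j) ^ p := Real.rpow_le_rpow (ha j) (hab j) hp.le
      _ = c ^ p * b j ^ p := Real.mul_rpow hc (hb j)
  have hb_sum : 0 ≤ ∑ j, b j ^ p := Finset.sum_nonneg fun j _ => Real.rpow_nonneg (hb j) p
  calc (∑ j, a j ^ p) ^ (1 / p) ≤ (c ^ p * ∑ j, b j ^ p) ^ (1 / p) :=
        Real.rpow_le_rpow (Finset.sum_nonneg fun j _ => Real.rpow_nonneg (ha j) p) hsum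
          (by positivity)
    _ = c * (∑ j, b j ^ p) ^ (1 / p) := by
      rw [Real.mul_rpow (by positivity) hb_sum, ← Real.rpow_mul hc,
        mul_one_div_cancel hp.ne', Real.rpow_one]

namespace ContinuousMultilinearMap

section CompSigma

variable {𝕜 : Type*} [NontriviallyNormedField 𝕜] {ι : Type*} [Fintype ι]
  {β : ι → Type*} [∀ l, Fintype (β l)]
  {G : (l : ι) → β l → Type*} [∀ l i, NormedAddCommGroup (G l i)] [∀ l i, NormedSpace 𝕜 (G l i)]
  {E : ι → Type*} [∀ l, NormedAddCommGroup (E l)] [∀ l, NormedSpace 𝕜 (E l)]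
  {F : Type*} [NormedAddCommGroup F] [NormedSpace 𝕜 F]

noncomputable def compContinuousMultilinearMap (T : ContinuousMultilinearMap 𝕜 E F)
    (B : ∀ l, ContinuousMultilinearMap 𝕜 (G l) (E l)) :
    ContinuousMultilinearMap 𝕜 (fun j : Σ l, β l => G j.1 j.2) F :=
  (T.toMultilinearMap.compMultilinearMap fun l => (B l).toMultilinearMap).mkContinuous
    (‖T‖ * ∏ l, ‖B l‖) fun x => by
      calc ‖T (fun l => B l (Sigma.curry x l))‖
          ≤ ‖T‖ * ∏ l, ‖B l (Sigma.curry x l)‖ := T.le_opNorm _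
        _ ≤ ‖T‖ * ∏ l, (‖B l‖ * ∏ i, ‖x ⟨l, i⟩‖) := by
          gcongr with l
          exact (B l).le_opNorm _
        _ = (‖T‖ * ∏ l, ‖B l‖) * ∏ j, ‖x j‖ := by
          rw [Fintype.prod_sigma, Finset.prod_mul_distrib, mul_assoc]

theorem norm_compContinuousMultilinearMap_le (T : ContinuousMultilinearMap 𝕜 E F)
    (B : ∀ l, ContinuousMultilinearMap 𝕜 (G l) (E l)) :
    ‖T.compContinuousMultilinearMap B‖ ≤ ‖T‖ * ∏ l, ‖B l‖ :=
  MultilinearMap.mkContinuous_norm_le _ (by positivity) _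

end CompSigma

section WeakNorm

variable {𝕜 : Type*} [RCLike 𝕜] {ι : Type*} [Fintype ι]
  {E : ι → Type*} [∀ i, NormedAddCommGroup (E i)] [∀ i, NormedSpace 𝕜 (E i)]

variable (𝕜) in
noncomputable def weakLpNorm (p : ℝ) {k : ℕ} (x : Fin k → ∀ i, E i) : ℝ :=
  ⨆ T : {T : ContinuousMultilinearMap 𝕜 E 𝕜 // ‖T‖ ≤ 1}, (∑ j, ‖T.1 (x j)‖ ^ p) ^ (1 / p)

theorem weakLpNorm_nonneg (p : ℝ) {k : ℕ} (x : Fin k → ∀ i, E i) : 0 ≤ weakLpNorm 𝕜 p x :=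
  Real.iSup_nonneg fun _ => by positivity

theorem bddAbove_range_lpNorm_apply {p : ℝ} (hp : 0 < p) {k : ℕ} (x : Fin k → ∀ i, E i) :
    BddAbove (Set.range fun T : {T : ContinuousMultilinearMap 𝕜 E 𝕜 // ‖T‖ ≤ 1} =>
      (∑ j, ‖T.1 (x j)‖ ^ p) ^ (1 / p)) := by
  refine ⟨1 * (∑ j, (∏ i, ‖x j i‖) ^ p) ^ (1 / p), ?_⟩
  rintro _ ⟨T, rfl⟩
  refine Real.rpow_sum_rpow_le_mul_of_le hp zero_le_one (fun _ => norm_nonneg _)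
    (fun _ => by positivity) fun j => ?_
  calc ‖T.1 (x j)‖ ≤ ‖T.1‖ * ∏ i, ‖x j i‖ := T.1.le_opNorm _
    _ ≤ 1 * ∏ i, ‖x j i‖ := by gcongr; exact T.2

theorem lpNorm_apply_le_norm_mul_weakLpNorm {p : ℝ} (hp : 0 < p) {k : ℕ}
    (S : ContinuousMultilinearMap 𝕜 E 𝕜) (x : Fin k → ∀ i, E i) :
    (∑ j, ‖S (x j)‖ ^ p) ^ (1 / p) ≤ ‖S‖ * weakLpNorm 𝕜 p x := by
  rcases eq_or_ne S 0 with rfl | hS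
  · simp [Real.zero_rpow hp.ne', Real.zero_rpow (inv_ne_zero hp.ne')]
  have hnorm : ‖S‖ ≠ 0 := norm_ne_zero_iff.2 hS
  set S₁ : ContinuousMultilinearMap 𝕜 E 𝕜 := ((‖S‖⁻¹ : ℝ) : 𝕜) • S
  have hS₁ : ‖S₁‖ ≤ 1 := by
    rw [norm_smul, RCLike.norm_ofReal, abs_inv, abs_norm, inv_mul_cancel₀ hnorm]
  have hS₁_apply (y : ∀ i, E i) : ‖S y‖ = ‖S‖ * ‖S₁ y‖ := by
    rw [smul_apply, norm_smul, RCLike.norm_ofReal, abs_inv, abs_norm, mul_inv_cancel_left₀ hnorm]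
  calc (∑ j, ‖S (x j)‖ ^ p) ^ (1 / p) ≤ ‖S‖ * (∑ j, ‖S₁ (x j)‖ ^ p) ^ (1 / p) :=
        Real.rpow_sum_rpow_le_mul_of_le hp (norm_nonneg _) (fun _ => norm_nonneg _)
          (fun _ => norm_nonneg _) fun j => (hS₁_apply _).le
    _ ≤ ‖S‖ * weakLpNorm 𝕜 p x := by
      gcongr
      exact le_ciSup (f := fun T : {T : ContinuousMultilinearMap 𝕜 E 𝕜 // ‖T‖ ≤ 1} =>
        (∑ j, ‖T.1 (x j)‖ ^ p) ^ (1 / p)) (bddAbove_range_lpNorm_apply hp x) ⟨S₁, hS₁⟩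

end WeakNorm

theorem weakLpNorm_comp_le {𝕜 : Type*} [RCLike 𝕜] {ι : Type*} [Fintype ι]
    {β : ι → Type*} [∀ l, Fintype (β l)]
    {G : (Σ l, β l) → Type*} [∀ j, NormedAddCommGroup (G j)] [∀ j, NormedSpace 𝕜 (G j)]
    {E : ι → Type*} [∀ l, NormedAddCommGroup (E l)] [∀ l, NormedSpace 𝕜 (E l)]
    {p : ℝ} (hp : 0 < p) (B : ∀ l, ContinuousMultilinearMap 𝕜 (fun i : β l => G ⟨l, i⟩) (E l))
    {k : ℕ} (x : Fin k → ∀ j, G j) :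
    weakLpNorm 𝕜 p (fun j l => B l (fun i => x j ⟨l, i⟩)) ≤
      (∏ l, ‖B l‖) * weakLpNorm 𝕜 p x := by
  have : Nonempty {T : ContinuousMultilinearMap 𝕜 E 𝕜 // ‖T‖ ≤ 1} := ⟨⟨0, by simp⟩⟩
  refine ciSup_le fun T => ?_
  let S : ContinuousMultilinearMap 𝕜 G 𝕜 :=
    compContinuousMultilinearMap (G := fun l i => G ⟨l, i⟩) T.1 B
  calc (∑ j, ‖T.1 (fun l => B l (fun i => x j ⟨l, i⟩))‖ ^ p) ^ (1 / p)
      = (∑ j, ‖S (x j)‖ ^ p) ^ (1 / p) := rfl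
    _ ≤ ‖S‖ * weakLpNorm 𝕜 p x :=
      lpNorm_apply_le_norm_mul_weakLpNorm hp _ x
    _ ≤ (‖T.1‖ * ∏ l, ‖B l‖) * weakLpNorm 𝕜 p x := by
      gcongr
      · exact weakLpNorm_nonneg p x
      · exact norm_compContinuousMultilinearMap_le T.1 B
    _ ≤ (∏ l, ‖B l‖) * weakLpNorm 𝕜 p x :=
      mul_le_mul_of_nonneg_right (mul_le_of_le_one_left (by positivity) T.2)
        (weakLpNorm_nonneg p x)

end ContinuousMultilinearMap

open ContinuousMultilinearMap in
theorem StronglyPSummingWith.comp {𝕜 : Type*} [RCLike 𝕜] {ι : Type*} [Fintype ι]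
    {β : ι → Type*} [∀ l, Fintype (β l)]
    {G : (Σ l, β l) → Type*} [∀ j, NormedAddCommGroup (G j)] [∀ j, NormedSpace 𝕜 (G j)]
    {E : ι → Type*} [∀ l, NormedAddCommGroup (E l)] [∀ l, NormedSpace 𝕜 (E l)]
    {F H : Type*} [NormedAddCommGroup F] [NormedSpace 𝕜 F]
    [NormedAddCommGroup H] [NormedSpace 𝕜 H]
    {p C : ℝ} {A : ContinuousMultilinearMap 𝕜 E F} (hA : StronglyPSummingWith p C A)
    (hp : 0 < p) (hC : 0 ≤ C)
    (B : ∀ l, ContinuousMultilinearMap 𝕜 (fun i : β l => G ⟨l, i⟩) (E l)) (t : F →L[𝕜] H)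
    (D : ContinuousMultilinearMap 𝕜 G H)
    (hD : ∀ x : ∀ j, G j, D x = t (A (fun l => B l (fun i => x ⟨l, i⟩)))) :
    StronglyPSummingWith p (‖t‖ * C * ∏ l, ‖B l‖) D := by
  intro k x
  set y : Fin k → ∀ l, E l := fun j l => B l (fun i => x j ⟨l, i⟩)
  calc (∑ j, ‖D (x j)‖ ^ p) ^ (1 / p) ≤ ‖t‖ * (∑ j, ‖A (y j)‖ ^ p) ^ (1 / p) :=
        Real.rpow_sum_rpow_le_mul_of_le hp (norm_nonneg _) (fun _ => norm_nonneg _)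
          (fun _ => norm_nonneg _) fun j => (hD (x j)).symm ▸ t.le_opNorm _
    _ ≤ ‖t‖ * (C * weakLpNorm 𝕜 p y) := by gcongr; exact hA k y
    _ ≤ ‖t‖ * (C * ((∏ l, ‖B l‖) * weakLpNorm 𝕜 p x)) := by
      gcongr; exact weakLpNorm_comp_le hp B x
    _ = ‖t‖ * C * (∏ l, ‖B l‖) * weakLpNorm 𝕜 p x := by ring

theorem stmt4_general {𝕜 : Type*} [RCLike 𝕜] {n : ℕ} {κ : Fin n → ℕ}
    {E : Fin n → Type*}
    [∀ i, NormedAddCommGroup (E i)] [∀ i, NormedSpace 𝕜 (E i)]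
    {G : (Σ l : Fin n, Fin (κ l)) → Type*}
    [∀ i, NormedAddCommGroup (G i)] [∀ i, NormedSpace 𝕜 (G i)]
    {F H : Type*} [NormedAddCommGroup F] [NormedSpace 𝕜 F]
    [NormedAddCommGroup H] [NormedSpace 𝕜 H]
    {p : ℝ} (hp : 1 ≤ p) {C : ℝ} (hC : 0 < C)
    (A : ContinuousMultilinearMap 𝕜 E F) (hA : StronglyPSummingWith p C A)
    (B : ∀ l : Fin n, ContinuousMultilinearMap 𝕜 (fun i : Fin (κ l) => G ⟨l, i⟩) (E l))
    (t : F →L[𝕜] H)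
    (D : ContinuousMultilinearMap 𝕜 G H)
    (hD : ∀ x : ∀ i, G i, D x = t (A (fun l => B l (fun i => x ⟨l, i⟩)))) :
    StronglyPSummingWith p (‖t‖ * C * ∏ l, ‖B l‖) D :=
  hA.comp (zero_lt_one.trans_le hp) hC.le B t D hD

/-- the hyper-ideal property for strongly p-summing operators.
The domain `Fin m_n` is partitioned into `n` consecutive nonempty blocks of sizes
`κ l ≥ 1`, modelled by the index type `Σ l, Fin (κ l)`. If `D` is the composition
`t ∘ A ∘ (B_1,…,B_n)` and `A` is strongly p-summing with constant `C`, then `D`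
is strongly p-summing with constant `‖t‖ ⋅ C ⋅ ‖B_1‖⋯‖B_n‖`. -/
theorem stmt4 {𝕜 : Type*} [RCLike 𝕜] {n : ℕ} {κ : Fin n → ℕ} (hκ : ∀ l, 0 < κ l)
    {E : Fin n → Type*}
    [∀ i, NormedAddCommGroup (E i)] [∀ i, NormedSpace 𝕜 (E i)]
    [∀ i, CompleteSpace (E i)]
    {G : (Σ l : Fin n, Fin (κ l)) → Type*}
    [∀ i, NormedAddCommGroup (G i)] [∀ i, NormedSpace 𝕜 (G i)]
    [∀ i, CompleteSpace (G i)]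
    {F H : Type*} [NormedAddCommGroup F] [NormedSpace 𝕜 F] [CompleteSpace F]
    [NormedAddCommGroup H] [NormedSpace 𝕜 H] [CompleteSpace H]
    {p : ℝ} (hp : 1 ≤ p) {C : ℝ} (hC : 0 < C)
    (A : ContinuousMultilinearMap 𝕜 E F) (hA : StronglyPSummingWith p C A)
    (B : ∀ l : Fin n, ContinuousMultilinearMap 𝕜 (fun i : Fin (κ l) => G ⟨l, i⟩) (E l))
    (t : F →L[𝕜] H)
    (D : ContinuousMultilinearMap 𝕜 G H)
    (hD : ∀ x : ∀ i, G i, D x = t (A (fun l => B l (fun i => x ⟨l, i⟩)))) :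
    StronglyPSummingWith p (‖t‖ * C * ∏ l, ‖B l‖) D :=
  stmt4_general hp hC A hA B t D hD
end

section
/- Let I be an operator ideal, A : E_1 × ⋯ × E_n → F a continuous n-linear operator such that A(B_{E_1} × ⋯ × B_{E_n}) is I-bounded, let B_l : G_{m_{l-1}+1} × ⋯ × G_{m_l} → E_l (l = 1,...,n, with 1 ≤ m_1 < ⋯ < m_n, m_0 = 0) be continuous multilinear operators, and t : F → G a bounded linear operator. Then (t ∘ A ∘ (B_1,...,B_n))(B_{G_1} × ⋯ × B_{G_{m_n}}) is an I-bounded subset of G. -/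
open scoped BigOperators

/-- A bundled Banach space over `𝕜`. -/
structure BanachSp (𝕜 : Type) [RCLike 𝕜] where
  X : Type
  [grp : NormedAddCommGroup X]
  [nsp : NormedSpace 𝕜 X]
  [cpl : CompleteSpace X]

attribute [instance] BanachSp.grp BanachSp.nsp BanachSp.cpl

/-- An operator ideal: to each pair of Banach spaces it assigns a linear subspace
of the bounded operators containing the finite rank operators, stable under
composition with bounded operators on both sides. -/
structure OperatorIdeal (𝕜 : Type) [RCLike 𝕜] where
  mem : ∀ H F : BanachSp 𝕜, Set (H.X →L[𝕜] F.X)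
  zero_mem : ∀ H F : BanachSp 𝕜, (0 : H.X →L[𝕜] F.X) ∈ mem H F
  add_mem : ∀ (H F : BanachSp 𝕜) (u v : H.X →L[𝕜] F.X),
    u ∈ mem H F → v ∈ mem H F → u + v ∈ mem H F
  smul_mem : ∀ (H F : BanachSp 𝕜) (c : 𝕜) (u : H.X →L[𝕜] F.X),
    u ∈ mem H F → c • u ∈ mem H F
  finiteRank_mem : ∀ (H F : BanachSp 𝕜) (u : H.X →L[𝕜] F.X),
    FiniteDimensional 𝕜 (LinearMap.range (u : H.X →ₗ[𝕜] F.X)) → u ∈ mem H F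
  comp_mem : ∀ (G H F K : BanachSp 𝕜) (s : G.X →L[𝕜] H.X) (u : H.X →L[𝕜] F.X)
    (t : F.X →L[𝕜] K.X), u ∈ mem H F → t.comp (u.comp s) ∈ mem G K

/-- A subset `K` of a Banach space `F` is `I`-bounded if `K ⊆ u(B_H)` for some
Banach space `H` and some `u ∈ I(H;F)`. -/
def IsIBounded {𝕜 : Type} [RCLike 𝕜] (I : OperatorIdeal 𝕜) (F : BanachSp 𝕜)
    (K : Set F.X) : Prop :=
  ∃ H : BanachSp 𝕜, ∃ u ∈ I.mem H F, K ⊆ u '' Metric.closedBall 0 1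

/-! Each `B_l` maps the product of unit balls into the ball of radius `c_l = ‖B_l‖ + 1 > 0`.
Multilinearity of `A` pulls these scalars out, so the set lies in
`t((∏ c_l) • A(B_{E_1} × ⋯ × B_{E_n}))`, and `I`-boundedness is preserved by scalar multiples,
images under bounded operators and subsets. -/

open Set Pointwise

theorem OperatorIdeal.comp_left_mem {𝕜 : Type} [RCLike 𝕜] (I : OperatorIdeal 𝕜)
    {H F K : BanachSp 𝕜} {u : H.X →L[𝕜] F.X} (hu : u ∈ I.mem H F) (t : F.X →L[𝕜] K.X) :
    t.comp u ∈ I.mem H K := by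
  simpa using I.comp_mem H H F K (ContinuousLinearMap.id 𝕜 H.X) u t hu

namespace IsIBounded

variable {𝕜 : Type} [RCLike 𝕜] {I : OperatorIdeal 𝕜} {F : BanachSp 𝕜} {K : Set F.X}

theorem mono (hK : IsIBounded I F K) {L : Set F.X} (hLK : L ⊆ K) : IsIBounded I F L :=
  let ⟨H, u, hu, hKu⟩ := hK
  ⟨H, u, hu, hLK.trans hKu⟩

theorem image (hK : IsIBounded I F K) {G : BanachSp 𝕜} (t : F.X →L[𝕜] G.X) :
    IsIBounded I G (t '' K) := by
  obtain ⟨H, u, hu, hKu⟩ := hK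
  refine ⟨H, t.comp u, I.comp_left_mem hu t, ?_⟩
  rw [ContinuousLinearMap.coe_comp, image_comp]
  exact image_mono hKu

theorem smul (hK : IsIBounded I F K) (c : 𝕜) : IsIBounded I F (c • K) := by
  obtain ⟨H, u, hu, hKu⟩ := hK
  refine ⟨H, c • u, I.smul_mem H F c u hu, ?_⟩
  rintro _ ⟨y, hy, rfl⟩
  obtain ⟨z, hz, rfl⟩ := hKu hy
  exact ⟨z, hz, rfl⟩

end IsIBounded

theorem ContinuousMultilinearMap.image_pi_norm_le_subset_smul {𝕜 ι F : Type*}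
    [NontriviallyNormedField 𝕜] [Fintype ι] {E : ι → Type*}
    [∀ i, SeminormedAddCommGroup (E i)] [∀ i, NormedSpace 𝕜 (E i)]
    [SeminormedAddCommGroup F] [NormedSpace 𝕜 F]
    (A : ContinuousMultilinearMap 𝕜 E F) {c : ι → 𝕜} (hc : ∀ i, c i ≠ 0) :
    A '' {x | ∀ i, ‖x i‖ ≤ ‖c i‖} ⊆ (∏ i, c i) • A '' {x | ∀ i, ‖x i‖ ≤ 1} := by
  rintro _ ⟨x, hx, rfl⟩
  have hx' : (fun i => (c i)⁻¹ • x i) ∈ {x : ∀ i, E i | ∀ i, ‖x i‖ ≤ 1} := fun i => by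
    rw [norm_smul, norm_inv]
    exact inv_mul_le_one_of_le₀ (hx i) (norm_nonneg _)
  refine ⟨_, mem_image_of_mem A hx', ?_⟩
  change (∏ i, c i) • A (fun i => (c i)⁻¹ • x i) = A x
  simp only [← A.map_smul_univ, smul_inv_smul₀ (hc _)]

theorem stmt8_general {𝕜 : Type} [RCLike 𝕜] (I : OperatorIdeal 𝕜)
    {n : ℕ} {κ : Fin n → ℕ}
    {E : Fin n → Type}
    [∀ i, NormedAddCommGroup (E i)] [∀ i, NormedSpace 𝕜 (E i)]
    {G : (Σ l : Fin n, Fin (κ l)) → Type}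
    [∀ i, NormedAddCommGroup (G i)] [∀ i, NormedSpace 𝕜 (G i)]
    (F Gt : BanachSp 𝕜)
    (A : ContinuousMultilinearMap 𝕜 E F.X)
    (hA : IsIBounded I F (A '' {x : ∀ i, E i | ∀ i, ‖x i‖ ≤ 1}))
    (B : ∀ l : Fin n, ContinuousMultilinearMap 𝕜 (fun i : Fin (κ l) => G ⟨l, i⟩) (E l))
    (t : F.X →L[𝕜] Gt.X) :
    IsIBounded I Gt
      ((fun x : ∀ i, G i => t (A (fun l => B l (fun i => x ⟨l, i⟩)))) ''
        {x : ∀ i, G i | ∀ i, ‖x i‖ ≤ 1}) := by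
  set c : Fin n → 𝕜 := fun l => ((‖B l‖ + 1 : ℝ) : 𝕜)
  have hc_norm (l : Fin n) : ‖c l‖ = ‖B l‖ + 1 := RCLike.norm_of_nonneg (by positivity)
  have hc_ne (l : Fin n) : c l ≠ 0 := norm_pos_iff.mp (by rw [hc_norm]; positivity)
  refine ((hA.smul (∏ l, c l)).image t).mono ?_
  rintro _ ⟨x, hx, rfl⟩
  refine mem_image_of_mem t (A.image_pi_norm_le_subset_smul hc_ne ⟨_, fun l => ?_, rfl⟩)
  have hBx : ‖B l (fun i => x ⟨l, i⟩)‖ ≤ ‖B l‖ :=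
    (B l).unit_le_opNorm ((pi_norm_le_iff_of_nonneg zero_le_one).mpr fun i => hx _)
  rw [hc_norm]
  linarith

/-- if `A(B_{E_1} × ⋯ × B_{E_n})` is I-bounded, then for any
continuous multilinear operators `B_l` (defined on consecutive nonempty blocks
of the domain, modelled by the index type `Σ l, Fin (κ l)`) and any bounded
linear operator `t`, the image of the product of unit balls under
`t ∘ A ∘ (B_1,…,B_n)` is I-bounded. -/
theorem stmt8 {𝕜 : Type} [RCLike 𝕜] (I : OperatorIdeal 𝕜)
    {n : ℕ} {κ : Fin n → ℕ} (hκ : ∀ l, 0 < κ l)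
    {E : Fin n → Type}
    [∀ i, NormedAddCommGroup (E i)] [∀ i, NormedSpace 𝕜 (E i)]
    [∀ i, CompleteSpace (E i)]
    {G : (Σ l : Fin n, Fin (κ l)) → Type}
    [∀ i, NormedAddCommGroup (G i)] [∀ i, NormedSpace 𝕜 (G i)]
    [∀ i, CompleteSpace (G i)]
    (F Gt : BanachSp 𝕜)
    (A : ContinuousMultilinearMap 𝕜 E F.X)
    (hA : IsIBounded I F (A '' {x : ∀ i, E i | ∀ i, ‖x i‖ ≤ 1}))
    (B : ∀ l : Fin n, ContinuousMultilinearMap 𝕜 (fun i : Fin (κ l) => G ⟨l, i⟩) (E l))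
    (t : F.X →L[𝕜] Gt.X) :
    IsIBounded I Gt
      ((fun x : ∀ i, G i => t (A (fun l => B l (fun i => x ⟨l, i⟩)))) ''
        {x : ∀ i, G i | ∀ i, ‖x i‖ ≤ 1}) :=
  stmt8_general I F Gt A hA B t
end

section
/- Let A : E_1 × ⋯ × E_n → F be a continuous n-linear operator such that A(B_{E_1} × ⋯ × B_{E_n}) is relatively weakly compact in F. Then for continuous multilinear operators B_1,...,B_n as in the hyper-ideal property and a bounded linear operator t : F → H, the set (t ∘ A ∘ (B_1,...,B_n))(B_{G_1} × ⋯ × B_{G_{m_n}}) is relatively weakly compact in H. -/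
/-!
Each `B l` maps the unit ball into the ball of radius `c l := ‖B l‖ + 1`, so by multilinearity
`A ∘ (B_1, …, B_n)` maps the unit ball into `(∏ l, c l) • A(ball)`. Hence the set in question lies
in the image of `A(ball)` under the bounded operator `(∏ l, c l) • t`, which is weakly continuous
and so maps the weakly compact closure of `A(ball)` onto a weakly compact set.
-/

open Set

section WeakCompactness

variable {𝕜 F H : Type*} [RCLike 𝕜] [NormedAddCommGroup F] [NormedSpace 𝕜 F]
  [NormedAddCommGroup H] [NormedSpace 𝕜 H]

theorem isCompact_closure_toWeakSpace_of_subset_image {S : Set F} {T : Set H} (t : F →L[𝕜] H)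
    (hS : IsCompact (closure (toWeakSpace 𝕜 F '' S))) (hT : T ⊆ t '' S) :
    IsCompact (closure (toWeakSpace 𝕜 H '' T)) := by
  refine (hS.image (WeakSpace.map t).continuous).closure_of_subset ?_
  rintro _ ⟨y, hy, rfl⟩
  obtain ⟨x, hx, rfl⟩ := hT hy
  exact ⟨toWeakSpace 𝕜 F x, subset_closure ⟨x, hx, rfl⟩, rfl⟩

end WeakCompactness

namespace ContinuousMultilinearMap

variable {𝕜 ι F : Type*} [RCLike 𝕜] [Fintype ι] {E : ι → Type*}
  [∀ i, NormedAddCommGroup (E i)] [∀ i, NormedSpace 𝕜 (E i)]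
  [NormedAddCommGroup F] [NormedSpace 𝕜 F]

theorem norm_apply_le_of_forall_norm_le_one (f : ContinuousMultilinearMap 𝕜 E F)
    {m : ∀ i, E i} (hm : ∀ i, ‖m i‖ ≤ 1) : ‖f m‖ ≤ ‖f‖ := by
  simpa using f.le_opNorm_mul_prod_of_le hm

theorem exists_apply_eq_prod_smul_of_norm_le (f : ContinuousMultilinearMap 𝕜 E F)
    {m : ∀ i, E i} {r : ι → ℝ} (hr : ∀ i, 0 < r i) (hm : ∀ i, ‖m i‖ ≤ r i) :
    ∃ u : ∀ i, E i, (∀ i, ‖u i‖ ≤ 1) ∧ f m = (∏ i, (r i : 𝕜)) • f u := by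
  have hr𝕜 : ∀ i, (r i : 𝕜) ≠ 0 := fun i => RCLike.ofReal_ne_zero.2 (hr i).ne'
  refine ⟨fun i => (r i : 𝕜)⁻¹ • m i, fun i => ?_, ?_⟩
  · rw [norm_smul, norm_inv, RCLike.norm_ofReal, abs_of_pos (hr i), inv_mul_le_iff₀ (hr i),
      mul_one]
    exact hm i
  · rw [← f.map_smul_univ]
    simp only [smul_inv_smul₀ (hr𝕜 _)]

end ContinuousMultilinearMap

/-- Blocks of variables are modelled by `Σ l, Fin (κ l)`; relative weak compactness is
compactness of the closure of the image in `WeakSpace`. -/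
theorem stmt11_general {𝕜 : Type*} [RCLike 𝕜] {n : ℕ} {κ : Fin n → ℕ}
    {E : Fin n → Type*}
    [∀ i, NormedAddCommGroup (E i)] [∀ i, NormedSpace 𝕜 (E i)]
    {G : (Σ l : Fin n, Fin (κ l)) → Type*}
    [∀ i, NormedAddCommGroup (G i)] [∀ i, NormedSpace 𝕜 (G i)]
    {F H : Type*} [NormedAddCommGroup F] [NormedSpace 𝕜 F]
    [NormedAddCommGroup H] [NormedSpace 𝕜 H]
    (A : ContinuousMultilinearMap 𝕜 E F)
    (hA : IsCompact (closure ((toWeakSpace 𝕜 F) ''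
      (A '' {x : ∀ i, E i | ∀ i, ‖x i‖ ≤ 1}))))
    (B : ∀ l : Fin n, ContinuousMultilinearMap 𝕜 (fun i : Fin (κ l) => G ⟨l, i⟩) (E l))
    (t : F →L[𝕜] H) :
    IsCompact (closure ((toWeakSpace 𝕜 H) ''
      ((fun x : ∀ i, G i => t (A (fun l => B l (fun i => x ⟨l, i⟩)))) ''
        {x : ∀ i, G i | ∀ i, ‖x i‖ ≤ 1}))) := by
  let c : Fin n → ℝ := fun l => ‖B l‖ + 1
  have hc : ∀ l, 0 < c l := fun l => by positivity
  refine isCompact_closure_toWeakSpace_of_subset_image ((∏ l, (c l : 𝕜)) • t) hA ?_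
  rintro _ ⟨x, hx, rfl⟩
  have hBx : ∀ l, ‖B l (fun i => x ⟨l, i⟩)‖ ≤ c l := fun l =>
    le_add_of_le_of_nonneg ((B l).norm_apply_le_of_forall_norm_le_one fun i => hx ⟨l, i⟩)
      zero_le_one
  obtain ⟨u, hu, hAu⟩ := A.exists_apply_eq_prod_smul_of_norm_le hc hBx
  exact ⟨A u, ⟨u, hu, rfl⟩, by simp only [FunLike.coe_smul, Pi.smul_apply, hAu, map_smul]⟩

/-- if a continuous multilinear operator `A` maps the product of
closed unit balls to a relatively weakly compact set, then so does any
composition `t ∘ A ∘ (B_1,…,B_n)` with continuous multilinear operators `B_l`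
(on consecutive blocks, modelled by `Σ l, Fin (κ l)`) and bounded linear `t`.
Relative weak compactness is expressed as compactness of the closure of the
image in the weak space. -/
theorem stmt11 {𝕜 : Type*} [RCLike 𝕜] {n : ℕ} {κ : Fin n → ℕ} (hκ : ∀ l, 0 < κ l)
    {E : Fin n → Type*}
    [∀ i, NormedAddCommGroup (E i)] [∀ i, NormedSpace 𝕜 (E i)]
    [∀ i, CompleteSpace (E i)]
    {G : (Σ l : Fin n, Fin (κ l)) → Type*}
    [∀ i, NormedAddCommGroup (G i)] [∀ i, NormedSpace 𝕜 (G i)]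
    [∀ i, CompleteSpace (G i)]
    {F H : Type*} [NormedAddCommGroup F] [NormedSpace 𝕜 F] [CompleteSpace F]
    [NormedAddCommGroup H] [NormedSpace 𝕜 H] [CompleteSpace H]
    (A : ContinuousMultilinearMap 𝕜 E F)
    (hA : IsCompact (closure ((toWeakSpace 𝕜 F) ''
      (A '' {x : ∀ i, E i | ∀ i, ‖x i‖ ≤ 1}))))
    (B : ∀ l : Fin n, ContinuousMultilinearMap 𝕜 (fun i : Fin (κ l) => G ⟨l, i⟩) (E l))
    (t : F →L[𝕜] H) :
    IsCompact (closure ((toWeakSpace 𝕜 H) ''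
      ((fun x : ∀ i, G i => t (A (fun l => B l (fun i => x ⟨l, i⟩)))) ''
        {x : ∀ i, G i | ∀ i, ‖x i‖ ≤ 1}))) :=
  stmt11_general A hA B t
end

section
/- Let p ≥ 1. A subset K of a Banach space F is relatively p-compact (i.e., K ⊆ {∑_j λ_j x_j : (λ_j) ∈ B_{ℓ_{p'}}} for some (x_j) ∈ ℓ_p(F)) if and only if K is I-bounded for the ideal K_p of p-compact linear operators, i.e., there exist a Banach space H and a p-compact linear operator u : H → F with K ⊆ u(B_H). -/
/-!
A sequence `x ∈ ℓ_p(F)` pairs with `ℓ_{p'}(𝕜)` through scalar multiplication, and Hölder's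
inequality makes the synthesis map `λ ↦ ∑_j λ_j • x_j` a bounded operator `ℓ_{p'}(𝕜) → F`.
The image of its closed unit ball is exactly the set of `p'`-combinations of `x`, so this
operator is `p`-compact and its ball image contains every set that `x` witnesses to be
relatively `p`-compact. Conversely, a subset of a relatively `p`-compact set is one.
-/

open scoped BigOperators ENNReal

/-- The set `{∑_j λ_j • x_j : (λ_j) ∈ B_{ℓ_{p'}}}` of `p'`-convex combinations of
the sequence `x`. -/
def pSumSet (𝕜 : Type*) [RCLike 𝕜] {F : Type*} [NormedAddCommGroup F]
    [NormedSpace 𝕜 F] (p' : ℝ≥0∞) [Fact (1 ≤ p')] (x : ℕ → F) : Set F :=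
  {y | ∃ l : lp (fun _ : ℕ => 𝕜) p', ‖l‖ ≤ 1 ∧ y = ∑' j, l j • x j}

/-- A subset `K` of a Banach space is relatively `p`-compact if
`K ⊆ {∑_j λ_j x_j : (λ_j) ∈ B_{ℓ_{p'}}}` for some `(x_j) ∈ ℓ_p(F)`,
where `p'` is the conjugate exponent of `p`. -/
def RelPCompact (𝕜 : Type*) [RCLike 𝕜] {F : Type*} [NormedAddCommGroup F]
    [NormedSpace 𝕜 F] (p : ℝ) (p' : ℝ≥0∞) [Fact (1 ≤ p')] (K : Set F) : Prop :=
  ∃ x : ℕ → F, Summable (fun j => ‖x j‖ ^ p) ∧ K ⊆ pSumSet 𝕜 p' x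

/-- The `p`-compact "size" of a set `K`: the infimum of `‖(x_j)‖_{ℓ_p}` over all
sequences `(x_j) ∈ ℓ_p(F)` with `K ⊆ {∑_j λ_j x_j : (λ_j) ∈ B_{ℓ_{p'}}}`. -/
noncomputable def kpSetNorm (𝕜 : Type*) [RCLike 𝕜] {F : Type*}
    [NormedAddCommGroup F] [NormedSpace 𝕜 F] (p : ℝ) (p' : ℝ≥0∞) [Fact (1 ≤ p')]
    (K : Set F) : ℝ :=
  sInf {c | ∃ x : ℕ → F, Summable (fun j => ‖x j‖ ^ p) ∧ K ⊆ pSumSet 𝕜 p' x ∧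
    c = (∑' j, ‖x j‖ ^ p) ^ (1 / p)}

section Synthesis

variable {𝕜 F : Type*} [RCLike 𝕜] [NormedAddCommGroup F] [NormedSpace 𝕜 F] [CompleteSpace F]

variable (𝕜) in
noncomputable def lp.synthesis (p q : ℝ≥0∞) [Fact (1 ≤ p)] [Fact (1 ≤ q)]
    [p.HolderConjugate q] (x : lp (fun _ : ℕ => F) q) : lp (fun _ : ℕ => 𝕜) p →L[𝕜] F :=
  (lp.dualPairing p q (fun _ => ContinuousLinearMap.lsmul 𝕜 𝕜) (K := 1)
    fun _ => ContinuousLinearMap.opNorm_lsmul_le).flip x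

theorem lp.synthesis_apply (p q : ℝ≥0∞) [Fact (1 ≤ p)] [Fact (1 ≤ q)]
    [p.HolderConjugate q] (x : lp (fun _ : ℕ => F) q) (l : lp (fun _ : ℕ => 𝕜) p) :
    lp.synthesis 𝕜 p q x l = ∑' j, l j • x j :=
  rfl

theorem lp.image_closedBall_synthesis (p q : ℝ≥0∞) [Fact (1 ≤ p)] [Fact (1 ≤ q)]
    [p.HolderConjugate q] (x : lp (fun _ : ℕ => F) q) :
    lp.synthesis 𝕜 p q x '' Metric.closedBall 0 1 = pSumSet 𝕜 p x := by
  ext y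
  simp only [Set.mem_image, mem_closedBall_zero_iff, pSumSet, Set.mem_ofPred_eq,
    lp.synthesis_apply, eq_comm (a := y)]

end Synthesis

theorem memℓp_ofReal_of_summable {α E : Type*} [NormedAddCommGroup E] {p : ℝ} (hp : 0 < p)
    {x : α → E} (hx : Summable fun j => ‖x j‖ ^ p) : Memℓp x (ENNReal.ofReal p) :=
  have hp' : (ENNReal.ofReal p).toReal = p := ENNReal.toReal_ofReal hp.le
  (memℓp_gen_iff (hp'.symm ▸ hp)).mpr (hp'.symm ▸ hx)

theorem RelPCompact.mono {𝕜 F : Type*} [RCLike 𝕜] [NormedAddCommGroup F] [NormedSpace 𝕜 F]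
    {p : ℝ} {p' : ℝ≥0∞} [Fact (1 ≤ p')] {K L : Set F} (hL : RelPCompact 𝕜 p p' L)
    (hKL : K ⊆ L) : RelPCompact 𝕜 p p' K :=
  let ⟨x, hx, hLx⟩ := hL
  ⟨x, hx, hKL.trans hLx⟩

theorem stmt13_general {𝕜 : Type} [RCLike 𝕜] {F : Type} [NormedAddCommGroup F]
    [NormedSpace 𝕜 F] [CompleteSpace F]
    {p : ℝ} (p' : ℝ≥0∞) [Fact (1 ≤ p')]
    (hconj : 1 / ENNReal.ofReal p + 1 / p' = 1)
    (K : Set F) :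
    RelPCompact 𝕜 p p' K ↔
      ∃ H : BanachSp 𝕜, ∃ u : H.X →L[𝕜] F,
        RelPCompact 𝕜 p p' (u '' Metric.closedBall 0 1) ∧
        K ⊆ u '' Metric.closedBall 0 1 := by
  have : (ENNReal.ofReal p).HolderConjugate p' :=
    ENNReal.holderConjugate_iff.mpr (by simpa only [one_div] using hconj)
  have : Fact (1 ≤ ENNReal.ofReal p) := ⟨ENNReal.HolderConjugate.one_le _ p'⟩
  have hp : 0 < p := ENNReal.ofReal_pos.mp (ENNReal.HolderConjugate.pos _ p')
  constructor
  · rintro ⟨x, hx, hKx⟩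
    let u := lp.synthesis 𝕜 p' (ENNReal.ofReal p) ⟨x, memℓp_ofReal_of_summable hp hx⟩
    have hu : u '' Metric.closedBall 0 1 = pSumSet 𝕜 p' x := lp.image_closedBall_synthesis ..
    exact ⟨⟨lp (fun _ : ℕ => 𝕜) p'⟩, u, hu ▸ ⟨x, hx, subset_rfl⟩, hu ▸ hKx⟩
  · rintro ⟨H, u, hu, hKu⟩
    exact hu.mono hKu

/-- a subset `K` of a Banach space `F` is relatively p-compact iff
there are a Banach space `H` and a p-compact linear operator `u : H → F` (i.e.
`u(B_H)` is relatively p-compact) with `K ⊆ u(B_H)`. -/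
theorem stmt13 {𝕜 : Type} [RCLike 𝕜] {F : Type} [NormedAddCommGroup F]
    [NormedSpace 𝕜 F] [CompleteSpace F]
    {p : ℝ} (hp : 1 ≤ p) (p' : ℝ≥0∞) [Fact (1 ≤ p')]
    (hconj : 1 / ENNReal.ofReal p + 1 / p' = 1)
    (K : Set F) :
    RelPCompact 𝕜 p p' K ↔
      ∃ H : BanachSp 𝕜, ∃ u : H.X →L[𝕜] F,
        RelPCompact 𝕜 p p' (u '' Metric.closedBall 0 1) ∧
        K ⊆ u '' Metric.closedBall 0 1 :=
  stmt13_general p' hconj K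
end

section
/- Let p ≥ 1 and let A : E_1 × ⋯ × E_n → F be a continuous n-linear operator such that A(B_{E_1} × ⋯ × B_{E_n}) is relatively p-compact. Define ‖A‖_{L_{K_p}} as the infimum of ‖(x_j)‖_{ℓ_p(F)} over all sequences (x_j) ∈ ℓ_p(F) with A(B_{E_1} × ⋯ × B_{E_n}) ⊆ {∑_j λ_j x_j : (λ_j) ∈ B_{ℓ_{p'}}}, and ‖A‖_{L_{⟨K_p⟩}} as the infimum of ‖u‖_{K_p} over all p-compact linear operators u : H → F (H a Banach space) with A(B_{E_1} × ⋯ × B_{E_n}) ⊆ u(B_H). Then ‖A‖_{L_{K_p}} = ‖A‖_{L_{⟨K_p⟩}}. -/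
open scoped BigOperators ENNReal

/-!
For `x ∈ ℓ_p(F)` the synthesis operator `ℓ_{p'} → F`, `λ ↦ ∑ λ_j x_j`, is bounded by Hölder's
inequality and maps the closed unit ball exactly onto `{∑ λ_j x_j : λ ∈ B_{ℓ_{p'}}}`, whose
`K_p`-size is at most `‖x‖_p`. So every sequence representing `A(B)` gives an admissible
operator `u` with `‖u‖_{K_p} ≤ ‖x‖_p`. Conversely, `A(B) ⊆ u(B_H)` means that every sequence
representing `u(B_H)` also represents `A(B)`, so `‖A‖_{L_{K_p}} ≤ ‖u‖_{K_p}`.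
-/

namespace lp

variable {ι : Type*} {E E' : ι → Type*} [∀ i, NormedAddCommGroup (E i)]
  [∀ i, NormedAddCommGroup (E' i)]

theorem summable_norm_mul_and_tsum_le_of_one_top (f : lp E 1) (g : lp E' ∞) :
    (Summable fun i => ‖f i‖ * ‖g i‖) ∧ ∑' i, ‖f i‖ * ‖g i‖ ≤ ‖f‖ * ‖g‖ := by
  have hf : HasSum (fun i => ‖f i‖) ‖f‖ := by simpa using lp.hasSum_norm (by simp) f
  have hle : ∀ i, ‖f i‖ * ‖g i‖ ≤ ‖f i‖ * ‖g‖ := fun i =>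
    mul_le_mul_of_nonneg_left (lp.norm_apply_le_norm ENNReal.top_ne_zero g i) (norm_nonneg _)
  have hdom : HasSum (fun i => ‖f i‖ * ‖g‖) (‖f‖ * ‖g‖) := hf.mul_right _
  have hs : Summable fun i => ‖f i‖ * ‖g i‖ :=
    hdom.summable.of_nonneg_of_le (fun i => by positivity) hle
  exact ⟨hs, hasSum_le hle hs.hasSum hdom⟩

theorem summable_norm_mul_and_tsum_le {p q : ℝ≥0∞} [p.HolderConjugate q] (f : lp E p)
    (g : lp E' q) :
    (Summable fun i => ‖f i‖ * ‖g i‖) ∧ ∑' i, ‖f i‖ * ‖g i‖ ≤ ‖f‖ * ‖g‖ := by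
  rcases eq_or_ne p ∞ with rfl | hp
  · obtain rfl : q = 1 := (ENNReal.HolderConjugate.eq_top_iff_eq_one ∞ q).1 rfl
    simpa only [mul_comm] using summable_norm_mul_and_tsum_le_of_one_top g f
  rcases eq_or_ne q ∞ with rfl | hq
  · obtain rfl : p = 1 := (ENNReal.HolderConjugate.eq_top_iff_eq_one ∞ p).1 rfl
    exact summable_norm_mul_and_tsum_le_of_one_top f g
  have hpq := ENNReal.HolderConjugate.toReal_of_ne_top hp hq
  rw [lp.norm_eq_tsum_rpow hpq.pos f, lp.norm_eq_tsum_rpow hpq.symm.pos g]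
  exact Real.summable_and_inner_le_Lp_mul_Lq_tsum_of_nonneg hpq (fun _ => norm_nonneg _)
    (fun _ => norm_nonneg _) (lp.hasSum_norm hpq.pos f).summable
    (lp.hasSum_norm hpq.symm.pos g).summable

section Synthesis

variable {𝕜 : Type*} [NormedField 𝕜] {F : Type*} [NormedAddCommGroup F] [NormedSpace 𝕜 F]
  {p q : ℝ≥0∞} [p.HolderConjugate q]

theorem summable_norm_smul (x : lp (fun _ : ι => F) p) (l : lp (fun _ : ι => 𝕜) q) :
    Summable fun i => ‖l i • x i‖ := by
  simpa only [norm_smul] using (summable_norm_mul_and_tsum_le l x).1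

variable [CompleteSpace F]

theorem summable_smul (x : lp (fun _ : ι => F) p) (l : lp (fun _ : ι => 𝕜) q) :
    Summable fun i => l i • x i :=
  .of_norm (summable_norm_smul x l)

variable [Fact (1 ≤ q)]

variable (𝕜 q) in
noncomputable def synthesis_s14 (x : lp (fun _ : ι => F) p) : lp (fun _ : ι => 𝕜) q →L[𝕜] F :=
  LinearMap.mkContinuous
    { toFun := fun l => ∑' i, l i • x i
      map_add' := fun l m => by
        simp only [lp.coeFn_add, Pi.add_apply, add_smul]
        exact (summable_smul x l).tsum_add (summable_smul x m)
      map_smul' := fun c l => by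
        simp only [lp.coeFn_smul, Pi.smul_apply, smul_eq_mul, mul_smul, RingHom.id_apply]
        exact (summable_smul x l).tsum_const_smul c }
    ‖x‖ fun l => calc
      ‖∑' i, l i • x i‖ ≤ ∑' i, ‖l i • x i‖ := norm_tsum_le_tsum_norm (summable_norm_smul x l)
      _ = ∑' i, ‖l i‖ * ‖x i‖ := by simp only [norm_smul]
      _ ≤ ‖l‖ * ‖x‖ := (summable_norm_mul_and_tsum_le l x).2
      _ = ‖x‖ * ‖l‖ := mul_comm _ _

@[simp]
theorem synthesis_apply_s14 (x : lp (fun _ : ι => F) p) (l : lp (fun _ : ι => 𝕜) q) :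
    synthesis_s14 𝕜 q x l = ∑' i, l i • x i :=
  rfl

end Synthesis

theorem image_closedBall_synthesis_s14 {𝕜 : Type*} [RCLike 𝕜] {F : Type*} [NormedAddCommGroup F]
    [NormedSpace 𝕜 F] [CompleteSpace F] {p q : ℝ≥0∞} [Fact (1 ≤ q)] [p.HolderConjugate q]
    (x : lp (fun _ : ℕ => F) p) :
    synthesis_s14 𝕜 q x '' Metric.closedBall 0 1 = pSumSet 𝕜 q x := by
  ext y
  simp [pSumSet, eq_comm]

end lp

section KpSetNorm

variable {𝕜 : Type*} [RCLike 𝕜] {F : Type*} [NormedAddCommGroup F] [NormedSpace 𝕜 F]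
  {p : ℝ} {p' : ℝ≥0∞} [Fact (1 ≤ p')] {K K' : Set F}

theorem kpSetNorm_nonneg : 0 ≤ kpSetNorm 𝕜 p p' K :=
  Real.sInf_nonneg <| by rintro _ ⟨x, -, -, rfl⟩; positivity

theorem kpSetNorm_le {x : ℕ → F} (hx : Summable fun j => ‖x j‖ ^ p) (hK : K ⊆ pSumSet 𝕜 p' x) :
    kpSetNorm 𝕜 p p' K ≤ (∑' j, ‖x j‖ ^ p) ^ (1 / p) :=
  csInf_le ⟨0, by rintro _ ⟨x, -, -, rfl⟩; positivity⟩ ⟨x, hx, hK, rfl⟩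

theorem le_kpSetNorm {c : ℝ} (hK : RelPCompact 𝕜 p p' K)
    (h : ∀ x : ℕ → F, Summable (fun j => ‖x j‖ ^ p) → K ⊆ pSumSet 𝕜 p' x →
      c ≤ (∑' j, ‖x j‖ ^ p) ^ (1 / p)) :
    c ≤ kpSetNorm 𝕜 p p' K :=
  let ⟨x, hx, hKx⟩ := hK
  le_csInf ⟨_, x, hx, hKx, rfl⟩ <| by rintro _ ⟨x, hx, hKx, rfl⟩; exact h x hx hKx

theorem kpSetNorm_mono (hK' : RelPCompact 𝕜 p p' K') (h : K ⊆ K') :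
    kpSetNorm 𝕜 p p' K ≤ kpSetNorm 𝕜 p p' K' :=
  le_kpSetNorm hK' fun _ hx hK'x => kpSetNorm_le hx (h.trans hK'x)

end KpSetNorm

theorem exists_image_closedBall_eq_pSumSet {𝕜 : Type} [RCLike 𝕜] {F : Type}
    [NormedAddCommGroup F] [NormedSpace 𝕜 F] [CompleteSpace F] {p : ℝ} {p' : ℝ≥0∞}
    [Fact (1 ≤ p')] [(ENNReal.ofReal p).HolderConjugate p'] {x : ℕ → F}
    (hx : Summable fun j => ‖x j‖ ^ p) :
    ∃ H : BanachSp 𝕜, ∃ u : H.X →L[𝕜] F, u '' Metric.closedBall 0 1 = pSumSet 𝕜 p' x := by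
  have hp : 0 < p := ENNReal.ofReal_pos.1 (ENNReal.HolderConjugate.pos _ p')
  let xₚ : lp (fun _ : ℕ => F) (ENNReal.ofReal p) :=
    ⟨x, memℓp_gen <| by rwa [ENNReal.toReal_ofReal hp.le]⟩
  exact ⟨⟨lp (fun _ : ℕ => 𝕜) p'⟩, lp.synthesis_s14 𝕜 p' xₚ, lp.image_closedBall_synthesis_s14 xₚ⟩

theorem stmt14_general {𝕜 : Type} [RCLike 𝕜] {n : ℕ} {E : Fin n → Type}
    [∀ i, NormedAddCommGroup (E i)] [∀ i, NormedSpace 𝕜 (E i)]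
    {F : Type} [NormedAddCommGroup F] [NormedSpace 𝕜 F] [CompleteSpace F]
    {p : ℝ} (p' : ℝ≥0∞) [Fact (1 ≤ p')]
    (hconj : 1 / ENNReal.ofReal p + 1 / p' = 1)
    (A : ContinuousMultilinearMap 𝕜 E F)
    (hA : RelPCompact 𝕜 p p' (A '' {x : ∀ i, E i | ∀ i, ‖x i‖ ≤ 1})) :
    kpSetNorm 𝕜 p p' (A '' {x : ∀ i, E i | ∀ i, ‖x i‖ ≤ 1}) =
      sInf {c : ℝ | ∃ H : BanachSp 𝕜, ∃ u : H.X →L[𝕜] F,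
        RelPCompact 𝕜 p p' (u '' Metric.closedBall 0 1) ∧
        A '' {x : ∀ i, E i | ∀ i, ‖x i‖ ≤ 1} ⊆ u '' Metric.closedBall 0 1 ∧
        c = kpSetNorm 𝕜 p p' (u '' Metric.closedBall 0 1)} := by
  set K := A '' {x : ∀ i, E i | ∀ i, ‖x i‖ ≤ 1}
  have : (ENNReal.ofReal p).HolderConjugate p' := by
    rwa [ENNReal.holderConjugate_iff, ← one_div, ← one_div]
  set R := {c : ℝ | ∃ H : BanachSp 𝕜, ∃ u : H.X →L[𝕜] F,
    RelPCompact 𝕜 p p' (u '' Metric.closedBall 0 1) ∧ K ⊆ u '' Metric.closedBall 0 1 ∧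
    c = kpSetNorm 𝕜 p p' (u '' Metric.closedBall 0 1)}
  have hmem : ∀ x : ℕ → F, Summable (fun j => ‖x j‖ ^ p) → K ⊆ pSumSet 𝕜 p' x →
      kpSetNorm 𝕜 p p' (pSumSet 𝕜 p' x) ∈ R := by
    intro x hx hKx
    obtain ⟨H, u, hu⟩ := exists_image_closedBall_eq_pSumSet (𝕜 := 𝕜) (p' := p') hx
    exact ⟨H, u, hu ▸ ⟨x, hx, subset_rfl⟩, hu ▸ hKx, by rw [hu]⟩
  obtain ⟨x₀, hx₀, hKx₀⟩ := hA
  apply le_antisymm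
  · refine le_csInf ⟨_, hmem x₀ hx₀ hKx₀⟩ ?_
    rintro _ ⟨H, u, hu, hKu, rfl⟩
    exact kpSetNorm_mono hu hKu
  · refine le_kpSetNorm ⟨x₀, hx₀, hKx₀⟩ fun x hx hKx => csInf_le_of_le ?_ (hmem x hx hKx) ?_
    · exact ⟨0, by rintro _ ⟨H, u, -, -, rfl⟩; exact kpSetNorm_nonneg⟩
    · exact kpSetNorm_le hx subset_rfl

/-- for a continuous multilinear operator `A` whose image of the
product of unit balls is relatively p-compact, the norm
`‖A‖_{L_{K_p}}` (infimum of `‖(x_j)‖_{ℓ_p}` over representing sequences)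
coincides with `‖A‖_{L_{⟨K_p⟩}}` (infimum of `‖u‖_{K_p}` over p-compact linear
operators `u : H → F` with `A(B_{E_1}×⋯×B_{E_n}) ⊆ u(B_H)`). -/
theorem stmt14 {𝕜 : Type} [RCLike 𝕜] {n : ℕ} {E : Fin n → Type}
    [∀ i, NormedAddCommGroup (E i)] [∀ i, NormedSpace 𝕜 (E i)]
    [∀ i, CompleteSpace (E i)]
    {F : Type} [NormedAddCommGroup F] [NormedSpace 𝕜 F] [CompleteSpace F]
    {p : ℝ} (hp : 1 ≤ p) (p' : ℝ≥0∞) [Fact (1 ≤ p')]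
    (hconj : 1 / ENNReal.ofReal p + 1 / p' = 1)
    (A : ContinuousMultilinearMap 𝕜 E F)
    (hA : RelPCompact 𝕜 p p' (A '' {x : ∀ i, E i | ∀ i, ‖x i‖ ≤ 1})) :
    kpSetNorm 𝕜 p p' (A '' {x : ∀ i, E i | ∀ i, ‖x i‖ ≤ 1}) =
      sInf {c : ℝ | ∃ H : BanachSp 𝕜, ∃ u : H.X →L[𝕜] F,
        RelPCompact 𝕜 p p' (u '' Metric.closedBall 0 1) ∧
        A '' {x : ∀ i, E i | ∀ i, ‖x i‖ ≤ 1} ⊆ u '' Metric.closedBall 0 1 ∧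
        c = kpSetNorm 𝕜 p p' (u '' Metric.closedBall 0 1)} :=
  stmt14_general p' hconj A hA
end

section
/- Let 0 < p ≤ 1 and let I be a p-Banach operator ideal. Let (A_j)_{j=1}^∞ be continuous n-linear operators from E_1 × ⋯ × E_n to F such that for each j there exist a Banach space H_j and u_j ∈ I(H_j;F) with A_j(B_{E_1} × ⋯ × B_{E_n}) ⊆ u_j(B_{H_j}), and suppose ∑_j ‖u_j‖_I^p < ∞. Then A = ∑_j A_j converges in operator norm, and there exist a Banach space H (namely the ℓ_∞-direct sum of the H_j) and u ∈ I(H;F) with A(B_{E_1} × ⋯ × B_{E_n}) ⊆ u(B_H) and ‖u‖_I^p ≤ ∑_j ‖u_j‖_I^p. -/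
open scoped BigOperators

/-- A `p`-Banach operator ideal: components `mem H F` of bounded linear
operators with a `p`-norm `nrm` dominating the operator norm, containing the
finite rank operators, satisfying the ideal inequality
`‖t∘u∘s‖_I ≤ ‖t‖‖u‖_I‖s‖`, and such that `∑ v_j` converges in `I` with
`‖∑ v_j‖_I^p ≤ ∑ ‖v_j‖_I^p` whenever `∑ ‖v_j‖_I^p < ∞`. -/
structure PBanachOperatorIdeal (𝕜 : Type) [RCLike 𝕜] (p : ℝ) where
  mem : ∀ H F : BanachSp 𝕜, Set (H.X →L[𝕜] F.X)
  nrm : ∀ H F : BanachSp 𝕜, (H.X →L[𝕜] F.X) → ℝ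
  nrm_nonneg : ∀ (H F : BanachSp 𝕜) (u : H.X →L[𝕜] F.X), 0 ≤ nrm H F u
  opNorm_le_nrm : ∀ (H F : BanachSp 𝕜), ∀ u ∈ mem H F, ‖u‖ ≤ nrm H F u
  finiteRank_mem : ∀ (H F : BanachSp 𝕜) (u : H.X →L[𝕜] F.X),
    FiniteDimensional 𝕜 (LinearMap.range (u : H.X →ₗ[𝕜] F.X)) → u ∈ mem H F
  comp_mem : ∀ (G H F K : BanachSp 𝕜) (s : G.X →L[𝕜] H.X) (u : H.X →L[𝕜] F.X)
    (t : F.X →L[𝕜] K.X), u ∈ mem H F →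
      t.comp (u.comp s) ∈ mem G K ∧
      nrm G K (t.comp (u.comp s)) ≤ ‖t‖ * nrm H F u * ‖s‖
  series_mem : ∀ (H F : BanachSp 𝕜) (v : ℕ → H.X →L[𝕜] F.X),
    (∀ j, v j ∈ mem H F) → Summable (fun j => nrm H F (v j) ^ p) →
      ∃ S : H.X →L[𝕜] F.X, HasSum v S ∧ S ∈ mem H F ∧
        nrm H F S ^ p ≤ ∑' j, nrm H F (v j) ^ p

/-!
Since `A_j` maps the unit ball into `u_j(B_{H_j})`, `‖A_j‖ ≤ ‖u_j‖ ≤ ‖u_j‖_I`; for `p ≤ 1` the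
summability of `‖u_j‖_I^p` forces that of `‖u_j‖_I`, so `∑ A_j` converges absolutely. On
`H = ⊕_∞ H_j` the operators `u_j ∘ π_j` have `I`-norm at most `‖u_j‖_I`, so their sum `w` lies in
`I(H;F)` with `‖w‖_I^p ≤ ∑ ‖u_j‖_I^p`. Given `x` in the unit ball, choose `y_j ∈ B_{H_j}` with
`A_j x = u_j y_j`: then `y = (y_j) ∈ B_H` and `w y = ∑ u_j y_j = ∑ A_j x`.
-/

open scoped ENNReal

theorem ContinuousMultilinearMap.opNorm_le_of_forall_norm_le_one {𝕜 : Type*} [RCLike 𝕜]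
    {ι : Type*} [Fintype ι] {E : ι → Type*} [∀ i, NormedAddCommGroup (E i)]
    [∀ i, NormedSpace 𝕜 (E i)] {G : Type*} [SeminormedAddCommGroup G] [NormedSpace 𝕜 G]
    (M : ContinuousMultilinearMap 𝕜 E G) {C : ℝ} (hC : 0 ≤ C)
    (h : ∀ x : ∀ i, E i, (∀ i, ‖x i‖ ≤ 1) → ‖M x‖ ≤ C) : ‖M‖ ≤ C := by
  refine M.opNorm_le_bound hC fun x => ?_
  by_cases! hx : ∃ i, x i = 0
  · obtain ⟨i, hi⟩ := hx
    simp [M.map_coord_zero i hi, Finset.prod_eq_zero (Finset.mem_univ i), hi]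
  set m : ∀ i, E i := fun i => (‖x i‖⁻¹ : 𝕜) • x i
  have hxm : x = fun i => (‖x i‖ : 𝕜) • m i := by
    funext i
    simp [m, smul_smul, hx i]
  calc ‖M x‖ = ‖(∏ i, (‖x i‖ : 𝕜)) • M m‖ := by rw [← M.map_smul_univ, ← hxm]
    _ = (∏ i, ‖x i‖) * ‖M m‖ := by simp [norm_smul]
    _ ≤ (∏ i, ‖x i‖) * C := by
        gcongr
        exact h m fun i => (norm_smul_inv_norm (hx i)).le
    _ = C * ∏ i, ‖x i‖ := mul_comm _ _

theorem ContinuousMultilinearMap.opNorm_le_of_image_subset_image_closedBall {𝕜 : Type*}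
    [RCLike 𝕜] {ι : Type*} [Fintype ι] {E : ι → Type*} [∀ i, NormedAddCommGroup (E i)]
    [∀ i, NormedSpace 𝕜 (E i)] {G H : Type*} [SeminormedAddCommGroup G] [NormedSpace 𝕜 G]
    [SeminormedAddCommGroup H] [NormedSpace 𝕜 H]
    {M : ContinuousMultilinearMap 𝕜 E G} {u : H →L[𝕜] G}
    (h : M '' {x | ∀ i, ‖x i‖ ≤ 1} ⊆ u '' Metric.closedBall 0 1) : ‖M‖ ≤ ‖u‖ := by
  refine M.opNorm_le_of_forall_norm_le_one (norm_nonneg u) fun x hx => ?_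
  obtain ⟨y, hy, hyx⟩ := h ⟨x, hx, rfl⟩
  rw [← hyx]
  exact u.le_of_opNorm_le_of_le le_rfl (mem_closedBall_zero_iff.mp hy) |>.trans_eq (mul_one _)

theorem Real.summable_of_summable_rpow {ι : Type*} {c : ι → ℝ} {p : ℝ} (hc : ∀ j, 0 ≤ c j)
    (hp : 0 < p) (hp1 : p ≤ 1) (h : Summable fun j => c j ^ p) : Summable c := by
  refine h.of_norm_bounded_eventually ?_
  filter_upwards [h.tendsto_cofinite_zero.eventually (gt_mem_nhds one_pos)] with j hj
  have hcj : c j ≤ 1 := by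
    by_contra! hcj
    exact hj.not_ge (Real.one_le_rpow hcj.le hp.le)
  rw [Real.norm_of_nonneg (hc j)]
  exact Real.self_le_rpow_of_le_one (hc j) hcj hp1

theorem lp.exists_coe_eq_norm_le {α : Type*} {E : α → Type*} [∀ i, NormedAddCommGroup (E i)]
    {y : ∀ i, E i} {C : ℝ} (hC : 0 ≤ C) (hy : ∀ i, ‖y i‖ ≤ C) :
    ∃ Y : lp E ∞, ⇑Y = y ∧ ‖Y‖ ≤ C :=
  ⟨⟨y, memℓp_infty ⟨C, by rintro - ⟨i, rfl⟩; exact hy i⟩⟩, rfl, lp.norm_le_of_forall_le hC hy⟩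

noncomputable abbrev BanachSp.lInfty {𝕜 : Type} [RCLike 𝕜] (H : ℕ → BanachSp 𝕜) : BanachSp 𝕜 :=
  ⟨lp (fun j => (H j).X) ∞⟩

namespace PBanachOperatorIdeal

variable {𝕜 : Type} [RCLike 𝕜] {p : ℝ} (I : PBanachOperatorIdeal 𝕜 p)

theorem comp_mem_of_norm_le_one {G H F : BanachSp 𝕜} {u : H.X →L[𝕜] F.X}
    (hu : u ∈ I.mem H F) {s : G.X →L[𝕜] H.X} (hs : ‖s‖ ≤ 1) :
    u.comp s ∈ I.mem G F ∧ I.nrm G F (u.comp s) ≤ I.nrm H F u := by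
  obtain ⟨hmem, hnrm⟩ := I.comp_mem G H F F s u (.id 𝕜 F.X) hu
  rw [ContinuousLinearMap.id_comp] at hmem hnrm
  refine ⟨hmem, hnrm.trans ?_⟩
  calc ‖ContinuousLinearMap.id 𝕜 F.X‖ * I.nrm H F u * ‖s‖ ≤ 1 * I.nrm H F u * 1 := by
        have := I.nrm_nonneg H F u
        gcongr
        exact ContinuousLinearMap.norm_id_le
    _ = I.nrm H F u := by ring

theorem exists_mem_lInfty_hasSum {Hs : ℕ → BanachSp 𝕜} {F : BanachSp 𝕜} (hp : 0 ≤ p)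
    {u : ∀ j, (Hs j).X →L[𝕜] F.X} (hu : ∀ j, u j ∈ I.mem (Hs j) F)
    (hsum : Summable fun j => I.nrm (Hs j) F (u j) ^ p) :
    ∃ w ∈ I.mem (BanachSp.lInfty Hs) F,
      (∀ y : lp (fun j => (Hs j).X) ∞, HasSum (fun j => u j (y j)) (w y)) ∧
      I.nrm (BanachSp.lInfty Hs) F w ^ p ≤ ∑' j, I.nrm (Hs j) F (u j) ^ p := by
  have hπ j : ‖lp.evalCLM 𝕜 (fun j => (Hs j).X) ∞ j‖ ≤ 1 :=
    LinearMap.mkContinuous_norm_le _ zero_le_one _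
  have hv j := I.comp_mem_of_norm_le_one (G := .lInfty Hs) (hu j) (hπ j)
  have hvle j := Real.rpow_le_rpow (I.nrm_nonneg _ _ _) (hv j).2 hp
  have hvsum := hsum.of_nonneg_of_le (fun j => Real.rpow_nonneg (I.nrm_nonneg _ _ _) p) hvle
  obtain ⟨w, hw, hwmem, hwle⟩ := I.series_mem _ F _ (fun j => (hv j).1) hvsum
  exact ⟨w, hwmem, fun y => ((ContinuousLinearMap.apply 𝕜 F.X y).hasSum hw :),
    hwle.trans (hvsum.tsum_le_tsum hvle hsum)⟩

end PBanachOperatorIdeal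

theorem stmt19_general {𝕜 : Type} [RCLike 𝕜] {p : ℝ} (hp : 0 < p) (hp1 : p ≤ 1)
    (I : PBanachOperatorIdeal 𝕜 p)
    {n : ℕ} {E : Fin n → Type}
    [∀ i, NormedAddCommGroup (E i)] [∀ i, NormedSpace 𝕜 (E i)]
    (F : BanachSp 𝕜)
    (A : ℕ → ContinuousMultilinearMap 𝕜 E F.X)
    (Hs : ℕ → BanachSp 𝕜) (u : ∀ j, (Hs j).X →L[𝕜] F.X)
    (humem : ∀ j, u j ∈ I.mem (Hs j) F)
    (hsub : ∀ j, A j '' {x : ∀ i, E i | ∀ i, ‖x i‖ ≤ 1} ⊆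
      u j '' Metric.closedBall 0 1)
    (hsum : Summable fun j => I.nrm (Hs j) F (u j) ^ p) :
    ∃ S : ContinuousMultilinearMap 𝕜 E F.X, HasSum A S ∧
      ∃ H : BanachSp 𝕜, ∃ w ∈ I.mem H F,
        S '' {x : ∀ i, E i | ∀ i, ‖x i‖ ≤ 1} ⊆ w '' Metric.closedBall 0 1 ∧
        I.nrm H F w ^ p ≤ ∑' j, I.nrm (Hs j) F (u j) ^ p := by
  have hA j : ‖A j‖ ≤ I.nrm (Hs j) F (u j) :=
    (ContinuousMultilinearMap.opNorm_le_of_image_subset_image_closedBall (hsub j)).trans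
      (I.opNorm_le_nrm _ _ _ (humem j))
  have hAsum : Summable A :=
    (Real.summable_of_summable_rpow (fun j => I.nrm_nonneg _ _ _) hp hp1 hsum).of_norm_bounded hA
  obtain ⟨w, hwmem, hw, hwle⟩ := I.exists_mem_lInfty_hasSum hp.le humem hsum
  refine ⟨∑' j, A j, hAsum.hasSum, _, w, hwmem, ?_, hwle⟩
  rintro - ⟨x, hx, rfl⟩
  choose y hy hyx using fun j => hsub j ⟨x, hx, rfl⟩
  obtain ⟨Y, rfl, hY⟩ :=
    lp.exists_coe_eq_norm_le zero_le_one fun j => mem_closedBall_zero_iff.1 (hy j)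
  refine ⟨Y, mem_closedBall_zero_iff.2 hY, (hw Y).unique ?_⟩
  simpa only [hyx] using ContinuousMultilinearMap.hasSum_eval hAsum.hasSum x

/-- let `I` be a `p`-Banach operator ideal (`0 < p ≤ 1`), and let
`(A_j)` be continuous `n`-linear operators into `F` such that
`A_j(B_{E_1}×⋯×B_{E_n}) ⊆ u_j(B_{H_j})` with `u_j ∈ I(H_j;F)` and
`∑_j ‖u_j‖_I^p < ∞`. Then `∑_j A_j` converges in operator norm to `A` and there
are a Banach space `H` and `u ∈ I(H;F)` with `A(B_{E_1}×⋯×B_{E_n}) ⊆ u(B_H)`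
and `‖u‖_I^p ≤ ∑_j ‖u_j‖_I^p`. -/
theorem stmt19 {𝕜 : Type} [RCLike 𝕜] {p : ℝ} (hp : 0 < p) (hp1 : p ≤ 1)
    (I : PBanachOperatorIdeal 𝕜 p)
    {n : ℕ} {E : Fin n → Type}
    [∀ i, NormedAddCommGroup (E i)] [∀ i, NormedSpace 𝕜 (E i)]
    [∀ i, CompleteSpace (E i)]
    (F : BanachSp 𝕜)
    (A : ℕ → ContinuousMultilinearMap 𝕜 E F.X)
    (Hs : ℕ → BanachSp 𝕜) (u : ∀ j, (Hs j).X →L[𝕜] F.X)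
    (humem : ∀ j, u j ∈ I.mem (Hs j) F)
    (hsub : ∀ j, A j '' {x : ∀ i, E i | ∀ i, ‖x i‖ ≤ 1} ⊆
      u j '' Metric.closedBall 0 1)
    (hsum : Summable fun j => I.nrm (Hs j) F (u j) ^ p) :
    ∃ S : ContinuousMultilinearMap 𝕜 E F.X, HasSum A S ∧
      ∃ H : BanachSp 𝕜, ∃ w ∈ I.mem H F,
        S '' {x : ∀ i, E i | ∀ i, ‖x i‖ ≤ 1} ⊆ w '' Metric.closedBall 0 1 ∧
        I.nrm H F w ^ p ≤ ∑' j, I.nrm (Hs j) F (u j) ^ p :=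
  stmt19_general hp hp1 I F A Hs u humem hsub hsum
end
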